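/- arXiv:1106.0605 — 3 statements merged into one kernel-verified Lean document; each statement's English description precedes it below -/
import Mathlib

section
/- Every finite connected simple graph G has a spanning tree T and an alternating sign on T, i.e., a labelling φ : E(T) → {+, −} such that for every cotree edge e ∈ E(G) \ E(T), the unique path v₀, v₁, …, v_ℓ in T joining the two endpoints of e satisfies φ(v_i v_{i+1}) ≠ φ(v_{i+1} v_{i+2}) for all i = 0, 1, …, ℓ − 2. -/
/-!
Use a normal spanning tree: a rooted spanning tree in which the ends of every edge of `G` are
comparable in the tree order. One exists by induction on `G`: delete the edges at the root `r`
and hang normal trees of the components of `G - r`, rooted at neighbours of `r`, below `r`.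
Sign each tree edge by the parity of the depth of its upper end. By normality, the tree path
between the ends of an edge of `G` runs from one end straight up to the other, so depths along
it are monotone and consecutive signs differ.
-/

open Relation

namespace SimpleGraph

variable {V : Type*} {G : SimpleGraph V} {r : V} {p : V → V} {d : V → ℕ}

/-- `ReflTransGen (ParentStep r p) v u` says that `u` is an ancestor of `v` in the rooted tree
with root `r` and parent map `p`. -/
def ParentStep (r : V) (p : V → V) (a b : V) : Prop := a ≠ r ∧ p a = b

/-- The tree on the component of `r`, given by the parent map `p` and the depth function `d`. -/
structure IsRootedTree (G : SimpleGraph V) (r : V) (p : V → V) (d : V → ℕ) : Prop where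
  depth_root : d r = 0
  adj_parent ⦃v : V⦄ : G.Reachable r v → v ≠ r → G.Adj (p v) v
  depth_parent ⦃v : V⦄ : G.Reachable r v → v ≠ r → d (p v) + 1 = d v

/-- Normal in the sense of Diestel. -/
structure IsNormalTree (G : SimpleGraph V) (r : V) (p : V → V) (d : V → ℕ) : Prop
    extends G.IsRootedTree r p d where
  comparable ⦃u v : V⦄ : G.Reachable r u → G.Adj u v →
    ReflTransGen (ParentStep r p) v u ∨ ReflTransGen (ParentStep r p) u v

theorem IsRootedTree.reflTransGen_root (hT : G.IsRootedTree r p d) {v : V}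
    (hv : G.Reachable r v) : ReflTransGen (ParentStep r p) v r := by
  induction hd : d v using Nat.strong_induction_on generalizing v with
  | _ n ih =>
    by_cases hvr : v = r
    · rw [hvr]
    · have hdepth := hT.depth_parent hv hvr
      exact .head ⟨hvr, rfl⟩
        (ih _ (by omega) (hv.trans (hT.adj_parent hv hvr).symm.reachable) rfl)

theorem eq_of_reachable_of_forall_not_adj {u v : V} (hu : ∀ x, ¬ G.Adj u x)
    (huv : G.Reachable u v) : u = v := by
  by_contra hne
  obtain ⟨x, hx⟩ := huv.nonempty_neighborSet_left hne
  exact hu x hx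

theorem isNormalTree_of_forall_not_adj (hr : ∀ x, ¬ G.Adj r x) (p : V → V) :
    G.IsNormalTree r p fun _ => 0 where
  depth_root := rfl
  adj_parent _ hv hvr := absurd (eq_of_reachable_of_forall_not_adj hr hv).symm hvr
  depth_parent _ hv hvr := absurd (eq_of_reachable_of_forall_not_adj hr hv).symm hvr
  comparable _ _ hu huv := absurd (eq_of_reachable_of_forall_not_adj hr hu ▸ huv) (hr _)

theorem Reachable.exists_adj_reachable_deleteIncidenceSet {v : V} (hv : G.Reachable r v)
    (hvr : v ≠ r) : ∃ x, G.Adj r x ∧ (G.deleteIncidenceSet r).Reachable x v := by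
  rw [reachable_iff_reflTransGen] at hv
  induction hv with
  | refl => exact absurd rfl hvr
  | @tail u v _ huv ih =>
    by_cases hur : u = r
    · exact ⟨v, hur ▸ huv, .rfl⟩
    · obtain ⟨x, hx, hxu⟩ := ih hur
      exact ⟨x, hx, hxu.trans (deleteIncidenceSet_adj.mpr ⟨huv, hur, hvr⟩).reachable⟩

theorem exists_componentwise_adj_reachable_deleteIncidenceSet (G : SimpleGraph V) (r : V) :
    ∃ a : V → V,
      (∀ ⦃v⦄, G.Reachable r v → v ≠ r →
        G.Adj r (a v) ∧ (G.deleteIncidenceSet r).Reachable (a v) v) ∧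
      ∀ ⦃u v⦄, (G.deleteIncidenceSet r).Reachable u v → a u = a v := by
  set G' := G.deleteIncidenceSet r
  have hcomp (C : G'.ConnectedComponent) :
      ∃ x, (∃ y, G.Adj r y ∧ G'.connectedComponentMk y = C) →
        G.Adj r x ∧ G'.connectedComponentMk x = C := by
    by_cases h : ∃ y, G.Adj r y ∧ G'.connectedComponentMk y = C
    · obtain ⟨y, hy⟩ := h
      exact ⟨y, fun _ => hy⟩
    · exact ⟨r, fun h' => absurd h' h⟩
  choose f hf using hcomp
  refine ⟨fun v => f (G'.connectedComponentMk v), fun v hv hvr => ?_,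
    fun u v huv => congrArg f (ConnectedComponent.sound huv)⟩
  obtain ⟨y, hy, hyv⟩ := hv.exists_adj_reachable_deleteIncidenceSet hvr
  obtain ⟨hadj, hmk⟩ := hf _ ⟨y, hy, ConnectedComponent.sound hyv⟩
  exact ⟨hadj, ConnectedComponent.exact hmk⟩

theorem ne_of_reachable_deleteIncidenceSet {x w : V} (hxw : (G.deleteIncidenceSet r).Reachable x w)
    (hx : x ≠ r) : w ≠ r := by
  rintro rfl
  refine hx (eq_of_reachable_of_forall_not_adj (fun y h => ?_) hxw.symm).symm
  exact (deleteIncidenceSet_adj.mp h).2.1 rfl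

section Glue

variable [DecidableEq V] {P : V → V → V} {D : V → V → ℕ} {a : V → V}

/-- `a v` is the root, adjacent to `r`, of the tree `P (a v)` on the component of `v` in
`G - r`; that tree is hung below `r`. -/
def gluedParent (r : V) (a : V → V) (P : V → V → V) (v : V) : V :=
  if v = a v then r else P (a v) v

def gluedDepth (r : V) (a : V → V) (D : V → V → ℕ) (v : V) : ℕ :=
  if v = r then 0 else D (a v) v + 1

variable (ha : ∀ ⦃v⦄, G.Reachable r v → v ≠ r →
    G.Adj r (a v) ∧ (G.deleteIncidenceSet r).Reachable (a v) v)
  (ha_eq : ∀ ⦃u v⦄, (G.deleteIncidenceSet r).Reachable u v → a u = a v)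
include ha ha_eq

theorem isRootedTree_glued (hPD : ∀ x, (G.deleteIncidenceSet r).IsRootedTree x (P x) (D x)) :
    G.IsRootedTree r (gluedParent r a P) (gluedDepth r a D) := by
  refine ⟨if_pos rfl, fun v hv hvr => ?_, fun v hv hvr => ?_⟩
  · by_cases hva : v = a v
    · rw [gluedParent, if_pos hva]
      exact hva ▸ (ha hv hvr).1
    · rw [gluedParent, if_neg hva]
      exact deleteIncidenceSet_le G r ((hPD (a v)).adj_parent (ha hv hvr).2 hva)
  · by_cases hva : v = a v
    · have hroot : D (a v) v = 0 := by
        nth_rw 2 [hva]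
        exact (hPD (a v)).depth_root
      simp only [gluedParent, gluedDepth, if_pos hva, if_neg hvr, hroot, if_true]
    · have hadj := (hPD (a v)).adj_parent (ha hv hvr).2 hva
      have hwr : P (a v) v ≠ r := (deleteIncidenceSet_adj.mp hadj).2.1
      have haw : a (P (a v) v) = a v := ha_eq hadj.reachable
      simp only [gluedParent, gluedDepth, if_neg hva, if_neg hwr, if_neg hvr, haw]
      rw [(hPD (a v)).depth_parent (ha hv hvr).2 hva]

theorem reflTransGen_parentStep_glued
    (hPD : ∀ x, (G.deleteIncidenceSet r).IsRootedTree x (P x) (D x))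
    {u : V} (hu : G.Reachable r u) (hur : u ≠ r) {b c : V}
    (hbc : ReflTransGen (ParentStep (a u) (P (a u))) b c)
    (hb : (G.deleteIncidenceSet r).Reachable (a u) b) :
    ReflTransGen (ParentStep r (gluedParent r a P)) b c := by
  induction hbc using ReflTransGen.head_induction_on with
  | refl => exact .refl
  | @head b b' hstep _ ih =>
    obtain ⟨hbu, rfl⟩ := hstep
    have hab : a b = a u := (ha_eq hb).symm.trans (ha_eq (ha hu hur).2)
    have hbr : b ≠ r := ne_of_reachable_deleteIncidenceSet hb (ha hu hur).1.ne'
    have hadj := (hPD (a u)).adj_parent hb hbu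
    exact .head ⟨hbr, by rw [gluedParent, hab, if_neg hbu]⟩
      (ih (hb.trans hadj.symm.reachable))

theorem isNormalTree_glued (hPD : ∀ x, (G.deleteIncidenceSet r).IsNormalTree x (P x) (D x)) :
    G.IsNormalTree r (gluedParent r a P) (gluedDepth r a D) := by
  have hrooted := isRootedTree_glued ha ha_eq fun x => (hPD x).toIsRootedTree
  refine ⟨hrooted, fun u v hu huv => ?_⟩
  by_cases hur : u = r
  · exact .inl (hur ▸ hrooted.reflTransGen_root (hu.trans huv.reachable))
  by_cases hvr : v = r
  · exact .inr (hvr ▸ hrooted.reflTransGen_root hu)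
  have huv' : (G.deleteIncidenceSet r).Adj u v := deleteIncidenceSet_adj.mpr ⟨huv, hur, hvr⟩
  have hau := (ha hu hur).2
  have hlift {b c : V} := reflTransGen_parentStep_glued (b := b) (c := c) ha ha_eq
    (fun x => (hPD x).toIsRootedTree) hu hur
  rcases (hPD (a u)).comparable hau huv' with h | h
  · exact .inl (hlift h (hau.trans huv'.reachable))
  · exact .inr (hlift h hau)

end Glue

theorem exists_isNormalTree [Finite V] (G : SimpleGraph V) (r : V) :
    ∃ p d, G.IsNormalTree r p d := by
  induction G using WellFoundedLT.induction generalizing r with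
  | ind G ih =>
    by_cases hr : ∃ x, G.Adj r x
    · obtain ⟨x, hx⟩ := hr
      have hlt : G.deleteIncidenceSet r < G := by
        refine lt_of_le_of_ne (deleteIncidenceSet_le G r) fun h => ?_
        rw [← h] at hx
        exact (deleteIncidenceSet_adj.mp hx).2.1 rfl
      classical
      choose P D hPD using ih _ hlt
      obtain ⟨a, ha, ha_eq⟩ := G.exists_componentwise_adj_reachable_deleteIncidenceSet r
      exact ⟨_, _, isNormalTree_glued ha ha_eq hPD⟩
    · push Not at hr
      exact ⟨id, _, isNormalTree_of_forall_not_adj hr id⟩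

def parentGraph (r : V) (p : V → V) : SimpleGraph V := fromRel (ParentStep r p)

namespace IsRootedTree

variable (hT : G.IsRootedTree r p d)
include hT

theorem parentGraph_adj {a b : V} (ha : G.Reachable r a) (hab : ParentStep r p a b) :
    (parentGraph r p).Adj a b := by
  obtain ⟨har, rfl⟩ := hab
  have := hT.depth_parent ha har
  exact (fromRel_adj _ _ _).mpr ⟨fun h => by rw [← h] at this; omega, .inl ⟨har, rfl⟩⟩

theorem parentGraph_le (hspan : ∀ v, G.Reachable r v) : parentGraph r p ≤ G := by
  rintro a b hab
  rcases ((fromRel_adj _ _ _).mp hab).2 with ⟨har, rfl⟩ | ⟨hbr, rfl⟩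
  · exact (hT.adj_parent (hspan a) har).symm
  · exact hT.adj_parent (hspan b) hbr

theorem reflTransGen_adj_of_reflTransGen_parentStep {u v : V} (hv : G.Reachable r v)
    (hvu : ReflTransGen (ParentStep r p) v u) : ReflTransGen (parentGraph r p).Adj v u := by
  induction hvu using ReflTransGen.head_induction_on with
  | refl => exact .refl
  | head hstep _ ih =>
    obtain ⟨hvr, rfl⟩ := hstep
    exact .head (hT.parentGraph_adj hv ⟨hvr, rfl⟩)
      (ih (hv.trans (hT.adj_parent hv hvr).symm.reachable))

theorem parentGraph_connected (hspan : ∀ v, G.Reachable r v) : (parentGraph r p).Connected := by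
  have hroot (v : V) : (parentGraph r p).Reachable v r := by
    rw [reachable_iff_reflTransGen]
    exact hT.reflTransGen_adj_of_reflTransGen_parentStep (hspan v)
      (hT.reflTransGen_root (hspan v))
  exact (connected_iff _).mpr ⟨fun u v => (hroot u).trans (hroot v).symm, ⟨r⟩⟩

/-- Every edge of the parent graph is `s(v, p v)` for a unique non-root `v`. -/
theorem card_edgeSet_parentGraph [Finite V] (hspan : ∀ v, G.Reachable r v) :
    Nat.card (parentGraph r p).edgeSet + 1 = Nat.card V := by
  classical
  let f : {v // v ≠ r} → (parentGraph r p).edgeSet :=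
    fun v => ⟨s(v, p v), hT.parentGraph_adj (hspan v) ⟨v.2, rfl⟩⟩
  have hf : Function.Bijective f := by
    refine ⟨fun v w hvw => ?_, fun ⟨e, he⟩ => ?_⟩
    · have hv := hT.depth_parent (hspan v) v.2
      have hw := hT.depth_parent (hspan w) w.2
      rcases Sym2.eq_iff.mp (congrArg Subtype.val hvw) with ⟨h, -⟩ | ⟨h₁, h₂⟩
      · exact Subtype.ext h
      · rw [h₂] at hv
        rw [← h₁] at hw
        omega
    · induction e using Sym2.ind with
      | h a b =>
        rcases ((fromRel_adj _ _ _).mp ((mem_edgeSet _).mp he)).2 with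
          ⟨har, rfl⟩ | ⟨hbr, rfl⟩
        · exact ⟨⟨a, har⟩, rfl⟩
        · exact ⟨⟨b, hbr⟩, Subtype.ext Sym2.eq_swap⟩
  rw [← Nat.card_congr (Equiv.ofBijective f hf), ← Finite.card_option,
    Nat.card_congr (Equiv.optionSubtypeNe r)]

theorem parentGraph_isTree [Finite V] (hspan : ∀ v, G.Reachable r v) :
    (parentGraph r p).IsTree :=
  isTree_iff_connected_and_card.mpr
    ⟨hT.parentGraph_connected hspan, hT.card_edgeSet_parentGraph hspan⟩

theorem exists_isPath_of_reflTransGen {u v : V} (hvu : ReflTransGen (ParentStep r p) v u)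
    (hv : G.Reachable r v) : ∃ w : (parentGraph r p).Walk v u,
      w.IsPath ∧ ∀ i ≤ w.length, d (w.getVert i) + i = d v := by
  induction hvu using ReflTransGen.head_induction_on with
  | refl => exact ⟨.nil, .nil, fun i hi => by simp_all⟩
  | head hstep _ ih =>
    obtain ⟨hvr, rfl⟩ := hstep
    have hdepth := hT.depth_parent hv hvr
    obtain ⟨w, hw, hd⟩ := ih (hv.trans (hT.adj_parent hv hvr).symm.reachable)
    refine ⟨.cons (hT.parentGraph_adj hv ⟨hvr, rfl⟩) w, hw.cons fun hmem => ?_, ?_⟩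
    · obtain ⟨i, hi, hile⟩ := Walk.mem_support_iff_exists_getVert.mp hmem
      have := hd i hile
      rw [hi] at this
      omega
    · rintro (_ | i) hi
      · simp
      · rw [Walk.getVert_cons_succ]
        have := hd i (by simp only [Walk.length_cons] at hi; omega)
        omega

end IsRootedTree

theorem IsNormalTree.depth_getVert_of_isPath [Finite V] (hT : G.IsNormalTree r p d)
    (hspan : ∀ v, G.Reachable r v) {u v : V} (huv : G.Adj u v)
    {q : (parentGraph r p).Walk u v} (hq : q.IsPath) :
    (∀ j ≤ q.length, d (q.getVert j) = d u + j) ∨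
      (∀ j ≤ q.length, d (q.getVert j) + j = d u) := by
  have hacyc := (hT.parentGraph_isTree hspan).isAcyclic
  rcases hT.comparable (hspan u) huv with h | h
  · obtain ⟨w, hw, hd⟩ := hT.exists_isPath_of_reflTransGen h (hspan v)
    obtain rfl : q = w.reverse := congrArg Subtype.val
      ((hacyc.subsingleton_path u v).elim ⟨q, hq⟩ ⟨w.reverse, hw.reverse⟩)
    have hdu := hd w.length le_rfl
    rw [Walk.getVert_length] at hdu
    refine .inl fun j hj => ?_
    rw [Walk.length_reverse] at hj
    rw [Walk.getVert_reverse]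
    have := hd (w.length - j) (by omega)
    omega
  · obtain ⟨w, hw, hd⟩ := hT.exists_isPath_of_reflTransGen h (hspan u)
    obtain rfl : q = w :=
      congrArg Subtype.val ((hacyc.subsingleton_path u v).elim ⟨q, hq⟩ ⟨w, hw⟩)
    exact .inr hd

def depthSign (d : V → ℕ) : Sym2 V → Bool :=
  Sym2.lift ⟨fun a b => decide (Even (min (d a) (d b))), fun a b => by simp only [min_comm]⟩

theorem depthSign_ne_of_monotone {a b c : V}
    (h : d b = d a + 1 ∧ d c = d b + 1 ∨ d a = d b + 1 ∧ d b = d c + 1) :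
    depthSign d s(a, b) ≠ depthSign d s(b, c) := by
  simp only [depthSign, Sym2.lift_mk, ne_eq, decide_eq_decide, Nat.even_iff]
  omega

end SimpleGraph

open SimpleGraph

/-- Every finite connected simple graph `G` has a spanning tree `T` and an alternating
sign on `T`: a labelling `φ` of the edges of `T` by `Bool` (`+`/`-`) such that for every
cotree edge (an edge of `G` not in `T`) with endpoints `u, v`, the unique path
`v₀, v₁, …, v_ℓ` in `T` joining `u` and `v` satisfies
`φ(v_i v_{i+1}) ≠ φ(v_{i+1} v_{i+2})` for all `i = 0, …, ℓ - 2`. -/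
theorem exists_spanning_tree_with_alternating_sign
    {V : Type*} [Fintype V] (G : SimpleGraph V) (hG : G.Connected) :
    ∃ T : SimpleGraph V, T ≤ G ∧ T.IsTree ∧
      ∃ φ : Sym2 V → Bool,
        ∀ ⦃u v : V⦄, G.Adj u v → ¬ T.Adj u v →
          ∀ p : T.Walk u v, p.IsPath →
            ∀ i : ℕ, i + 2 ≤ p.length →
              φ s(p.getVert i, p.getVert (i + 1)) ≠
                φ s(p.getVert (i + 1), p.getVert (i + 2)) := by
  obtain ⟨r⟩ := hG.nonempty
  obtain ⟨p, d, hT⟩ := G.exists_isNormalTree r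
  have hspan : ∀ v, G.Reachable r v := hG.preconnected r
  refine ⟨parentGraph r p, hT.parentGraph_le hspan, hT.parentGraph_isTree hspan, depthSign d,
    fun u v huv _ q hq i hi => depthSign_ne_of_monotone ?_⟩
  rcases hT.depth_getVert_of_isPath hspan huv hq with h | h <;>
  · have h₀ := h i (by omega)
    have h₁ := h (i + 1) (by omega)
    have h₂ := h (i + 2) (by omega)
    omega
end

section
/- Let G be a finite connected simple graph, v* a fixed vertex, and for each spanning tree T of G set Ψ(T) = Σ_{v ∈ V(G)} d_T(v*, v). If T_M is a spanning tree of G with Ψ(T_M) maximal among all spanning trees of G, then for every cotree edge e ∈ E(G) \ E(T_M), the sequence of distances d_{T_M}(v*, v₀), d_{T_M}(v*, v₁), …, d_{T_M}(v*, v_ℓ) along the unique path v₀, v₁, …, v_ℓ in T_M joining the endpoints of e is either strictly increasing or strictly decreasing. -/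
/-!
In a tree rooted at `r`, distances from `r` are monotone along the path joining `u` and `v`
exactly when one endpoint lies on the root path of the other, i.e. when
`d(r, v) = d(r, u) + d(u, v)` for the endpoint `v` farther from `r`. If this fails for a cotree
edge `uv`, cut the tree edge from `u` to its parent and add `uv` instead. The subtree hanging
below `u` does not contain `r`, `v` or the parent of `u`, so this is again a spanning tree, and
in it every vertex of that subtree moves `d(r, v) + 1 - d(r, u) ≥ 1` farther from the root,
while no other vertex comes closer. This strictly increases `Ψ`. The distance bound is read off
a potential that grows by at most one along each edge of the new tree.
-/

open Finset

namespace SimpleGraph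

variable {V : Type*} {G : SimpleGraph V} {r u v x y : V}

namespace Walk

lemma dist_start_getVert_le (p : G.Walk x y) (i : ℕ) : G.dist x (p.getVert i) ≤ i :=
  (dist_le (p.take i)).trans (by simp [take_length])

lemma dist_getVert_end_le (p : G.Walk x y) (i : ℕ) : G.dist (p.getVert i) y ≤ p.length - i :=
  (dist_le (p.drop i)).trans_eq (p.drop_length i)

lemma dist_add_dist_le_length [DecidableEq V] (p : G.Walk x y) (hu : u ∈ p.support) :
    G.dist x u + G.dist u y ≤ p.length := by
  rw [← congrArg length (p.take_spec hu), length_append]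
  exact add_le_add (dist_le _) (dist_le _)

lemma le_add_length_of_forall_adj {f : V → ℕ} (hf : ∀ a b, G.Adj a b → f b ≤ f a + 1)
    (p : G.Walk x y) : f y ≤ f x + p.length := by
  induction p with
  | nil => simp
  | cons h _ ih =>
    have := hf _ _ h
    rw [length_cons]
    omega

end Walk

lemma le_add_dist_of_forall_adj {f : V → ℕ} (hf : ∀ a b, G.Adj a b → f b ≤ f a + 1)
    (h : G.Reachable x y) : f y ≤ f x + G.dist x y := by
  obtain ⟨p, hp⟩ := h.exists_walk_length_eq_dist
  exact hp ▸ p.le_add_length_of_forall_adj hf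

lemma IsAcyclic.length_eq_dist_of_isPath (hG : G.IsAcyclic) {p : G.Walk x y} (hp : p.IsPath) :
    p.length = G.dist x y := by
  obtain ⟨q, hq, hlen⟩ := p.reachable.exists_path_of_dist
  obtain rfl : p = q :=
    congrArg Subtype.val ((hG.subsingleton_path x y).elim ⟨p, hp⟩ ⟨q, hq⟩)
  exact hlen

namespace Connected

variable (hG : G.Connected)
include hG

lemma dist_getVert_lt_dist_getVert_succ (p : G.Walk x y)
    (h : G.dist r y = G.dist r x + p.length) {i : ℕ} (hi : i + 1 ≤ p.length) :
    G.dist r (p.getVert i) < G.dist r (p.getVert (i + 1)) := by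
  have := p.dist_start_getVert_le i
  have := p.dist_getVert_end_le (i + 1)
  have : G.dist r (p.getVert i) ≤ G.dist r x + G.dist x (p.getVert i) := hG.dist_triangle
  have : G.dist r y ≤ G.dist r (p.getVert (i + 1)) + G.dist (p.getVert (i + 1)) y :=
    hG.dist_triangle
  omega

lemma dist_getVert_succ_lt_dist_getVert (p : G.Walk x y)
    (h : G.dist r x = G.dist r y + p.length) {i : ℕ} (hi : i + 1 ≤ p.length) :
    G.dist r (p.getVert (i + 1)) < G.dist r (p.getVert i) := by
  have : G.dist (p.getVert i) x ≤ i := dist_comm ▸ p.dist_start_getVert_le i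
  have : G.dist y (p.getVert (i + 1)) ≤ p.length - (i + 1) :=
    dist_comm ▸ p.dist_getVert_end_le (i + 1)
  have : G.dist r x ≤ G.dist r (p.getVert i) + G.dist (p.getVert i) x := hG.dist_triangle
  have : G.dist r (p.getVert (i + 1)) ≤ G.dist r y + G.dist y (p.getVert (i + 1)) :=
    hG.dist_triangle
  omega

lemma exists_adj_dist_lt (hur : u ≠ r) : ∃ w, G.Adj u w ∧ G.dist r w < G.dist r u := by
  obtain ⟨p, hp⟩ := hG.exists_walk_length_eq_dist u r
  have hnil : ¬p.Nil := Walk.not_nil_of_ne hur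
  refine ⟨p.snd, p.adj_snd hnil, ?_⟩
  have := dist_le p.tail
  have := p.length_tail_add_one hnil
  rw [dist_comm (u := r), dist_comm (u := r)]
  omega

/-- A geodesic from `r` to `y` avoids `u` unless `u` lies between them. -/
lemma reachable_deleteEdges_of_dist_ne (h : G.dist r y ≠ G.dist r u + G.dist u y) (w : V) :
    (G.deleteEdges {s(u, w)}).Reachable r y := by
  classical
  obtain ⟨p, hp⟩ := hG.exists_walk_length_eq_dist r y
  refine reachable_deleteEdges_iff_exists_walk.mpr ⟨p, fun he => h ?_⟩
  have := p.dist_add_dist_le_length (p.fst_mem_support_of_mem_edges he)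
  have : G.dist r y ≤ G.dist r u + G.dist u y := hG.dist_triangle
  omega

lemma of_deleteEdges_le {H : SimpleGraph V} {a b : V} (hle : G.deleteEdges {s(a, b)} ≤ H)
    (hab : H.Reachable a b) : H.Connected := by
  have hadj : G.Adj ≤ H.Reachable := by
    intro x y hxy
    by_cases he : s(x, y) = s(a, b)
    · rcases Sym2.eq_iff.mp he with ⟨rfl, rfl⟩ | ⟨rfl, rfl⟩
      exacts [hab, hab.symm]
    · exact (hle (deleteEdges_adj.mpr ⟨hxy, he⟩)).reachable
  have := hG.nonempty
  exact ⟨fun x y => Relation.reflTransGen_le_of_equivalence_of_le H.reachable_is_equivalence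
    hadj x y ((reachable_iff_reflTransGen x y).mp (hG x y))⟩

end Connected

namespace IsTree

variable (hT : G.IsTree)
include hT

lemma not_reachable_deleteEdges {a b : V} (hab : G.Adj a b) :
    ¬(G.deleteEdges {s(a, b)}).Reachable a b :=
  isBridge_iff.mp (isAcyclic_iff_forall_adj_isBridge.mp hT.isAcyclic hab)

lemma isTree_deleteEdges_sup_edge {a b : V} (hab : G.Adj a b)
    (hax : (G.deleteEdges {s(a, b)}).Reachable a x)
    (hby : (G.deleteEdges {s(a, b)}).Reachable b y) :
    (G.deleteEdges {s(a, b)} ⊔ edge x y).IsTree := by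
  have hxy : ¬(G.deleteEdges {s(a, b)}).Reachable x y := fun h =>
    hT.not_reachable_deleteEdges hab (hax.trans (h.trans hby.symm))
  have hadj : (G.deleteEdges {s(a, b)} ⊔ edge x y).Adj x y :=
    (sup_adj ..).mpr <| .inr <|
      (edge_adj ..).mpr ⟨.inl ⟨rfl, rfl⟩, fun h => hxy (h ▸ .rfl)⟩
  refine ⟨hT.connected.of_deleteEdges_le le_sup_left ?_,
    (hT.isAcyclic.anti (deleteEdges_le _)).sup_edge_of_not_reachable hxy⟩
  exact (hax.mono le_sup_left).trans (hadj.reachable.trans (hby.symm.mono le_sup_left))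

theorem exists_isTree_sum_dist_lt [Fintype V] (hle : G.dist r u ≤ G.dist r v)
    (hne : G.dist r v ≠ G.dist r u + G.dist u v) :
    ∃ T ≤ G ⊔ edge u v, T.IsTree ∧ ∑ w, G.dist r w < ∑ w, T.dist r w := by
  classical
  have hG := hT.connected
  have hur : u ≠ r := by
    rintro rfl
    simp at hne
  obtain ⟨parent, hadj, hlt⟩ := hG.exists_adj_dist_lt hur
  set F := G.deleteEdges {s(u, parent)}
  have hrp : F.Reachable r parent := hG.reachable_deleteEdges_of_dist_ne (by omega) parent
  have hrv : F.Reachable r v := hG.reachable_deleteEdges_of_dist_ne hne parent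
  have hT' : (F ⊔ edge u v).IsTree :=
    hT.isTree_deleteEdges_sup_edge hadj .rfl (hrp.symm.trans hrv)
  have hcut : ∀ w, F.Reachable r w → ¬F.Reachable u w := fun w hw hu =>
    hT.not_reachable_deleteEdges hadj (hu.trans (hw.symm.trans hrp))
  let φ : V → ℕ := fun w =>
    G.dist r w + if F.Reachable u w then G.dist r v + 1 - G.dist r u else 0
  have hφ : ∀ a b, (F ⊔ edge u v).Adj a b → φ b ≤ φ a + 1 := by
    rintro a b (hab | hab)
    · have hreach : F.Reachable u a ↔ F.Reachable u b :=
        ⟨fun h => h.trans hab.reachable, fun h => h.trans hab.symm.reachable⟩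
      have := (deleteEdges_le _ hab).diff_dist_adj (u := r)
      simp only [φ, hreach]
      split_ifs <;> omega
    · obtain ⟨⟨rfl, rfl⟩ | ⟨rfl, rfl⟩, -⟩ := (edge_adj ..).mp hab <;>
        simp only [φ, Reachable.rfl, hcut _ hrv, if_true, if_false] <;> omega
  refine ⟨F ⊔ edge u v, sup_le_sup_right (deleteEdges_le _) _, hT', ?_⟩
  calc ∑ w, G.dist r w < ∑ w, φ w :=
        sum_lt_sum (fun w _ => Nat.le_add_right _ _) ⟨u, mem_univ u, by simp [φ]; omega⟩
    _ ≤ ∑ w, (F ⊔ edge u v).dist r w := sum_le_sum fun w _ => by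
        simpa [φ, hcut r .rfl] using le_add_dist_of_forall_adj hφ (hT'.connected r w)

end IsTree

end SimpleGraph

theorem maximal_distance_sum_spanning_tree_monotone_fundamental_paths_general
    {V : Type*} [Fintype V] (G : SimpleGraph V) (vstar : V)
    (TM : SimpleGraph V) (hTMG : TM ≤ G) (hTM : TM.IsTree)
    (hmax : ∀ T : SimpleGraph V, T ≤ G → T.IsTree →
      ∑ v : V, T.dist vstar v ≤ ∑ v : V, TM.dist vstar v) :
    ∀ ⦃u v : V⦄, G.Adj u v → ¬ TM.Adj u v →
      ∀ p : TM.Walk u v, p.IsPath →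
        ((∀ i : ℕ, i + 1 ≤ p.length →
            TM.dist vstar (p.getVert i) < TM.dist vstar (p.getVert (i + 1))) ∨
         (∀ i : ℕ, i + 1 ≤ p.length →
            TM.dist vstar (p.getVert i) > TM.dist vstar (p.getVert (i + 1)))) := by
  have hgeodesic : ∀ ⦃u v : V⦄, G.Adj u v → TM.dist vstar u ≤ TM.dist vstar v →
      TM.dist vstar v = TM.dist vstar u + TM.dist u v := by
    intro u v huv hle
    by_contra hne
    obtain ⟨T, hT, hTtree, hlt⟩ := hTM.exists_isTree_sum_dist_lt hle hne
    have hTG : T ≤ G := hT.trans (sup_le hTMG ((SimpleGraph.edge_le_iff _).mpr (.inr huv)))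
    exact (hmax T hTG hTtree).not_gt hlt
  intro u v huv _ p hp
  have hlen := hTM.isAcyclic.length_eq_dist_of_isPath hp
  rcases le_total (TM.dist vstar u) (TM.dist vstar v) with hle | hle
  · exact .inl fun i hi => hTM.connected.dist_getVert_lt_dist_getVert_succ p
      (hlen ▸ hgeodesic huv hle) hi
  · have hvu := hgeodesic huv.symm hle
    rw [SimpleGraph.dist_comm (u := v) (v := u)] at hvu
    exact .inr fun i hi => hTM.connected.dist_getVert_succ_lt_dist_getVert p
      (hlen ▸ hvu) hi

/-- Let `G` be a finite connected simple graph with a fixed vertex `v*`, and for a spanning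
tree `T` let `Ψ(T) = Σ_{v ∈ V(G)} d_T(v*, v)`. If `T_M` is a spanning tree maximizing `Ψ`,
then for every cotree edge with endpoints `u, v`, the distances from `v*` along the unique
path in `T_M` joining `u` and `v` are either strictly increasing or strictly decreasing. -/
theorem maximal_distance_sum_spanning_tree_monotone_fundamental_paths
    {V : Type*} [Fintype V] (G : SimpleGraph V) (hG : G.Connected) (vstar : V)
    (TM : SimpleGraph V) (hTMG : TM ≤ G) (hTM : TM.IsTree)
    (hmax : ∀ T : SimpleGraph V, T ≤ G → T.IsTree →
      ∑ v : V, T.dist vstar v ≤ ∑ v : V, TM.dist vstar v) :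
    ∀ ⦃u v : V⦄, G.Adj u v → ¬ TM.Adj u v →
      ∀ p : TM.Walk u v, p.IsPath →
        ((∀ i : ℕ, i + 1 ≤ p.length →
            TM.dist vstar (p.getVert i) < TM.dist vstar (p.getVert (i + 1))) ∨
         (∀ i : ℕ, i + 1 ≤ p.length →
            TM.dist vstar (p.getVert i) > TM.dist vstar (p.getVert (i + 1)))) :=
  maximal_distance_sum_spanning_tree_monotone_fundamental_paths_general G vstar TM hTMG hTM hmax
end

section
/- Let G be a finite connected simple graph with a fixed vertex v*, let T be a spanning tree of G, and let e = uv be a cotree edge with fundamental path v₀ = u, v₁, …, v_ℓ = v in T such that d_T(v*, v₀) ≤ d_T(v*, v_ℓ) and there is an index 1 ≤ i ≤ ℓ − 1 with d_T(v*, v_{i−1}) > d_T(v*, v_i) and d_T(v*, v_i) < d_T(v*, v_{i+1}). Let T′ be the spanning tree with edge set (E(T) ∪ {e}) \ {v_{i−1} v_i}. Then Σ_{w ∈ V(G)} d_T(v*, w) < Σ_{w ∈ V(G)} d_{T′}(v*, w). -/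
/-!
Since `d(v*, x) > d(v*, y)` for `x = v_{i-1}`, `y = v_i`, deleting the tree edge `xy` separates
`v*` from `x`, hence from `u`, which the path `p` joins to `x` without using `xy`. So a shortest
`T'`-path from `v*` that avoids `uv` is a walk in `T`, while one that uses `uv` must cross it from
`v` to `u` and has length at least `d_T(v*, v) + 1 + d_T(u, w) > d_T(v*, u) + d_T(u, w)`.
The `T'`-paths from `v*` to `u` are all of the second kind, which makes the inequality strict.
-/

open SimpleGraph Walk

namespace SimpleGraph

variable {V : Type*}

namespace Walk

variable {G : SimpleGraph V}

lemma exists_eq_append_cons_of_mem_edges {a b x y : V} (P : G.Walk a b)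
    (h : s(x, y) ∈ P.edges) :
    ∃ (c d : V) (hcd : G.Adj c d) (A : G.Walk a c) (B : G.Walk d b),
      s(c, d) = s(x, y) ∧ P = A.append (cons hcd B) := by
  induction P with
  | nil => simp at h
  | cons hab P ih =>
    rcases List.mem_cons.mp h with h | h
    · exact ⟨_, _, hab, nil, P, h.symm, rfl⟩
    · obtain ⟨c, d, hcd, A, B, hxy, rfl⟩ := ih h
      exact ⟨c, d, hcd, cons hab A, B, hxy, rfl⟩

lemma IsPath.getVert_succ_notMem_support_take {u v : V} {p : G.Walk u v} (hp : p.IsPath)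
    {n : ℕ} (hn : n < p.length) : p.getVert (n + 1) ∉ (p.take n).support := by
  rw [mem_support_iff_exists_getVert]
  rintro ⟨j, hj, -⟩
  have := hp.getVert_injOn (by simp; omega) (by simp; omega) ((p.take_getVert n j).symm.trans hj)
  omega

lemma IsPath.notMem_edges_take {u v : V} {p : G.Walk u v} (hp : p.IsPath) {n : ℕ}
    (hn : n < p.length) : s(p.getVert n, p.getVert (n + 1)) ∉ (p.take n).edges :=
  fun h ↦ hp.getVert_succ_notMem_support_take hn ((p.take n).snd_mem_support_of_mem_edges h)

lemma IsPath.not_isBridge_sup_edge {u v : V} {p : G.Walk u v} (hp : p.IsPath)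
    (huv : ¬ G.Adj u v) {e : Sym2 V} (he : e ∈ p.edges) : ¬ (G ⊔ edge u v).IsBridge e := by
  have hne : u ≠ v := by
    rintro rfl
    simp [(isPath_iff_nil.mp hp).eq_nil] at he
  have hvu : (G ⊔ edge u v).Adj v u := Or.inr <| (edge_adj ..).mpr ⟨by simp, hne.symm⟩
  have hcycle : (cons hvu (p.mapLe le_sup_left)).IsCycle := by
    refine (cons_isCycle_iff _ _).mpr ⟨hp.mapLe _, ?_⟩
    rw [edges_mapLe_eq_edges, Sym2.eq_swap]
    exact fun h ↦ huv (p.adj_of_mem_edges h)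
  exact fun hb ↦ hb.notMem_edges_of_isCycle hcycle (by simp [he])

lemma exists_walk_length_eq_of_le_sup_edge {H T' : SimpleGraph V} {u v a b : V}
    (hle : T' ≤ H ⊔ edge u v) (P : T'.Walk a b) (hP : s(u, v) ∉ P.edges) :
    ∃ Q : H.Walk a b, Q.length = P.length := by
  refine ⟨P.transfer H fun e he ↦ ?_, P.length_transfer _⟩
  have := edgeSet_mono hle (P.edges_subset_edgeSet he)
  rw [edgeSet_sup, edgeSet_edge] at this
  rcases this with h | ⟨h, -⟩
  · exact h
  · exact absurd (Set.mem_singleton_iff.mp h ▸ he) hP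

end Walk

lemma fromEdgeSet_edgeSet_union_sdiff (G : SimpleGraph V) (u v : V) (e : Sym2 V) :
    fromEdgeSet ((G.edgeSet ∪ {s(u, v)}) \ {e}) = (G ⊔ edge u v).deleteEdges {e} := by
  ext a b
  have : G.Adj a b → a ≠ b := Adj.ne
  simp only [fromEdgeSet_adj, deleteEdges_adj, sup_adj, edge_adj, Set.mem_sdiff, Set.mem_union,
    mem_edgeSet, Set.mem_singleton_iff, Sym2.eq_iff]
  tauto

lemma IsTree.not_reachable_deleteEdges_of_dist_lt {T : SimpleGraph V} (hT : T.IsTree)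
    {r x y : V} (hxy : T.Adj x y) (h : T.dist r y < T.dist r x) :
    ¬ (T.deleteEdges {s(x, y)}).Reachable r x := by
  classical
  have hry : (T.deleteEdges {s(x, y)}).Reachable r y := by
    obtain ⟨g, -, hg⟩ := hT.connected.exists_path_of_dist r y
    refine reachable_deleteEdges_iff_exists_walk.mpr ⟨g, fun hxyg ↦ ?_⟩
    have hx := g.fst_mem_support_of_mem_edges hxyg
    have := dist_le (g.takeUntil x hx)
    have := g.length_takeUntil_le_length hx
    omega
  have hbridge : T.IsBridge s(x, y) := isAcyclic_iff_forall_adj_isBridge.mp hT.isAcyclic hxy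
  exact fun hrx ↦ isBridge_iff.mp hbridge (hrx.symm.trans hry)

section EdgeSwap

variable {T H T' : SimpleGraph V} {r u v : V}

lemma Walk.IsTrail.dist_lt_length_of_mem_edges (hT : T.Connected) (hHT : H ≤ T)
    (hle : T' ≤ H ⊔ edge u v) (hru : ¬ H.Reachable r u) (hdist : T.dist r u ≤ T.dist r v)
    {w : V} {P : T'.Walk r w} (hP : P.IsTrail) (huv : s(u, v) ∈ P.edges) :
    T.dist r w < P.length := by
  obtain ⟨c, d, hcd, A, B, hcduv, rfl⟩ := P.exists_eq_append_cons_of_mem_edges huv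
  have hnodup := hP.edges_nodup
  rw [edges_append, edges_cons, hcduv, List.nodup_append, List.nodup_cons] at hnodup
  obtain ⟨A', hA'⟩ := A.exists_walk_length_eq_of_le_sup_edge hle
    fun h ↦ hnodup.2.2 _ h _ List.mem_cons_self rfl
  obtain ⟨B', hB'⟩ := B.exists_walk_length_eq_of_le_sup_edge hle hnodup.2.1.1
  obtain ⟨rfl, rfl⟩ : v = c ∧ u = d := by
    rcases Sym2.eq_iff.mp hcduv with ⟨rfl, rfl⟩ | ⟨rfl, rfl⟩
    · exact absurd A'.reachable hru
    · exact ⟨rfl, rfl⟩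
  have hrv := dist_le (A'.mapLe hHT)
  have huw := dist_le (B'.mapLe hHT)
  rw [length_mapLe] at hrv huw
  have := hT.dist_triangle (u := r) (v := u) (w := w)
  rw [length_append, length_cons]
  omega

lemma Walk.IsTrail.dist_le_length (hT : T.Connected) (hHT : H ≤ T)
    (hle : T' ≤ H ⊔ edge u v) (hru : ¬ H.Reachable r u) (hdist : T.dist r u ≤ T.dist r v)
    {w : V} {P : T'.Walk r w} (hP : P.IsTrail) : T.dist r w ≤ P.length := by
  by_cases huv : s(u, v) ∈ P.edges
  · exact (hP.dist_lt_length_of_mem_edges hT hHT hle hru hdist huv).le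
  · obtain ⟨Q, hQ⟩ := P.exists_walk_length_eq_of_le_sup_edge hle huv
    simpa [hQ] using dist_le (Q.mapLe hHT)

lemma Walk.IsTrail.dist_lt_length (hT : T.Connected) (hHT : H ≤ T)
    (hle : T' ≤ H ⊔ edge u v) (hru : ¬ H.Reachable r u) (hdist : T.dist r u ≤ T.dist r v)
    {P : T'.Walk r u} (hP : P.IsTrail) : T.dist r u < P.length := by
  refine hP.dist_lt_length_of_mem_edges hT hHT hle hru hdist ?_
  by_contra huv
  obtain ⟨Q, -⟩ := P.exists_walk_length_eq_of_le_sup_edge hle huv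
  exact hru Q.reachable

lemma sum_dist_lt_sum_dist_of_le_sup_edge [Fintype V] (hT : T.Connected) (hHT : H ≤ T)
    (hle : T' ≤ H ⊔ edge u v) (hru : ¬ H.Reachable r u) (hdist : T.dist r u ≤ T.dist r v)
    (hT' : T'.Connected) : ∑ w, T.dist r w < ∑ w, T'.dist r w := by
  have hle_dist (w : V) : T.dist r w ≤ T'.dist r w := by
    obtain ⟨P, hP, hPlen⟩ := hT'.exists_path_of_dist r w
    exact hPlen ▸ hP.isTrail.dist_le_length hT hHT hle hru hdist
  have hlt_dist : T.dist r u < T'.dist r u := by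
    obtain ⟨P, hP, hPlen⟩ := hT'.exists_path_of_dist r u
    exact hPlen ▸ hP.isTrail.dist_lt_length hT hHT hle hru hdist
  exact Finset.sum_lt_sum (fun w _ ↦ hle_dist w) ⟨u, Finset.mem_univ u, hlt_dist⟩

end EdgeSwap

end SimpleGraph

theorem edge_exchange_distance_sum_increases_general
    {V : Type*} [Fintype V] (vstar : V)
    (T : SimpleGraph V) (hT : T.IsTree)
    {u v : V} (heT : ¬ T.Adj u v)
    (p : T.Walk u v) (hp : p.IsPath)
    (hends : T.dist vstar u ≤ T.dist vstar v)
    (i : ℕ) (hi1 : 1 ≤ i) (hi2 : i + 1 ≤ p.length)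
    (hdown : T.dist vstar (p.getVert (i - 1)) > T.dist vstar (p.getVert i))
    (T' : SimpleGraph V)
    (hT' : T' = SimpleGraph.fromEdgeSet
        ((T.edgeSet ∪ {s(u, v)}) \ {s(p.getVert (i - 1), p.getVert i)})) :
    ∑ w : V, T.dist vstar w < ∑ w : V, T'.dist vstar w := by
  set x := p.getVert (i - 1)
  set y := p.getVert i
  have hsucc : i - 1 + 1 = i := Nat.sub_add_cancel hi1
  have hxy : T.Adj x y := by simpa [hsucc] using p.adj_getVert_succ (i := i - 1) (by omega)
  have hxy_mem : s(x, y) ∈ p.edges :=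
    p.mk_mem_edges_iff_exists.mpr ⟨i - 1, by omega, by rw [hsucc]⟩
  rw [fromEdgeSet_edgeSet_union_sdiff] at hT'
  have hT'_conn : T'.Connected := by
    rw [hT']
    exact (hT.connected.mono le_sup_left).connected_delete_edge_of_not_isBridge
      (hp.not_isBridge_sup_edge heT hxy_mem)
  have hux : (T.deleteEdges {s(x, y)}).Reachable u x :=
    reachable_deleteEdges_iff_exists_walk.mpr
      ⟨p.take (i - 1), by simpa [hsucc] using hp.notMem_edges_take (n := i - 1) (by omega)⟩
  have hru : ¬ (T.deleteEdges {s(x, y)}).Reachable vstar u :=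
    fun h ↦ hT.not_reachable_deleteEdges_of_dist_lt hxy hdown (h.trans hux)
  refine sum_dist_lt_sum_dist_of_le_sup_edge hT.connected (deleteEdges_le _) ?_ hru hends hT'_conn
  rw [hT', deleteEdges_sup]
  exact sup_le_sup_left (deleteEdges_le _) _

/-- Let `G` be a finite connected simple graph with a fixed vertex `v*`, `T` a spanning
tree of `G`, and `e = uv` a cotree edge with fundamental path `v₀ = u, …, v_ℓ = v` in `T`
such that `d_T(v*, v₀) ≤ d_T(v*, v_ℓ)` and there is an index `1 ≤ i ≤ ℓ - 1` with
`d_T(v*, v_{i-1}) > d_T(v*, v_i)` and `d_T(v*, v_i) < d_T(v*, v_{i+1})`. Let `T'` be the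
spanning tree with edge set `(E(T) ∪ {e}) \ {v_{i-1} v_i}`. Then
`Σ_{w ∈ V(G)} d_T(v*, w) < Σ_{w ∈ V(G)} d_{T'}(v*, w)`. -/
theorem edge_exchange_distance_sum_increases
    {V : Type*} [Fintype V] (G : SimpleGraph V) (hG : G.Connected) (vstar : V)
    (T : SimpleGraph V) (hTG : T ≤ G) (hT : T.IsTree)
    {u v : V} (he : G.Adj u v) (heT : ¬ T.Adj u v)
    (p : T.Walk u v) (hp : p.IsPath)
    (hends : T.dist vstar u ≤ T.dist vstar v)
    (i : ℕ) (hi1 : 1 ≤ i) (hi2 : i + 1 ≤ p.length)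
    (hdown : T.dist vstar (p.getVert (i - 1)) > T.dist vstar (p.getVert i))
    (hup : T.dist vstar (p.getVert i) < T.dist vstar (p.getVert (i + 1)))
    (T' : SimpleGraph V)
    (hT' : T' = SimpleGraph.fromEdgeSet
        ((T.edgeSet ∪ {s(u, v)}) \ {s(p.getVert (i - 1), p.getVert i)})) :
    ∑ w : V, T.dist vstar w < ∑ w : V, T'.dist vstar w :=
  edge_exchange_distance_sum_increases_general vstar T hT heT p hp hends i hi1 hi2 hdown T' hT'
end
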